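/- For every integer k ≥ 0, the following identity of formal power series in ℝ[[T]] holds: Σ_{n≥0} L_{m,r}[n,k]_q · T^n/[n]_q! = (1/([k]_{q^m}! · [m]_q^k)) · Σ_{j=0}^{k} (−1)^{k−j} q^{m·binom(k−j,2)} [k choose j]_{q^m} · (Σ_{n≥0} (∏_{i=0}^{n−1}[2r+jm+im]_q) · T^n/[n]_q!). (This is the exponential generating function of the (q,r)-Whitney-Lah numbers, with F[x,m,T] = Σ_{n≥0} [x|m]_{\overline{n},q} T^n/[n]_q! evaluated at x = 2r+jm.) -/

import Mathlib

open Finset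

/-- The `q`-integer `[s]_q = (q^s - 1)/(q - 1)` for an integer `s`. -/
noncomputable def qint (q : ℝ) (s : ℤ) : ℝ := (q ^ s - 1) / (q - 1)

/-- The `q`-factorial `[n]_q! = ∏_{i=1}^n [i]_q`. -/
noncomputable def qfact (q : ℝ) : ℕ → ℝ
  | 0 => 1
  | n + 1 => qfact q n * qint q (n + 1)

/-- The `q`-binomial coefficient `[k choose j]_q`. -/
noncomputable def qbinom (q : ℝ) (k j : ℕ) : ℝ := qfact q k / (qfact q j * qfact q (k - j))

/-- The `(q,r)`-Whitney-Lah numbers `L_{m,r}[n,k]_q`, defined by `L[0,0] = 1`,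
`L[n,k] = 0` for `k > n`, and the triangular recurrence
`L[n,k] = q^(2r+m(k-1)+m(n-1)) L[n-1,k-1] + [2r+km+(n-1)m]_q L[n-1,k]`. -/
noncomputable def qLah (q : ℝ) (m r : ℕ) : ℕ → ℕ → ℝ
  | 0, 0 => 1
  | 0, _ + 1 => 0
  | n + 1, 0 => qint q (2 * r + n * m) * qLah q m r n 0
  | n + 1, k + 1 =>
      q ^ (2 * r + m * k + m * n) * qLah q m r n k
        + qint q (2 * r + (k + 1) * m + n * m) * qLah q m r n (k + 1)

/-! Clearing the denominator `[k]_{q^m}! [m]_q^k`, the identity says coefficientwise that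
`[k]_{q^m}! [m]_q^k L[n,k] = ∑_j c_{k,j} ∏_{i<n} [2r+jm+im]_q`, where `c_{k,j}` is the
coefficient of `x^j` in `∏_{i<k} (x - q^{mi})`. The right-hand side obeys the recurrence of
`L`: write `[2r+jm+nm]_q = [2r+(k+1)m+nm]_q + ([2r+jm+nm]_q - [2r+(k+1)m+nm]_q)`; the difference is
`-q^{2r+jm+nm} [k+1-j]_{q^m} [m]_q`, and `c_{k+1,j} [k+1-j]_{q^m} = -q^{m(k-j)} [k+1]_{q^m} c_{k,j}`
turns that part into `q^{2r+mk+mn} [k+1]_{q^m} [m]_q` times the `(n,k)` sum. The initial values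
match because `∑_j c_{k,j} = ∏_{i<k} (1 - q^{mi})` vanishes for `k ≥ 1`. -/

section QInt

variable {q : ℝ}

lemma qint_natCast (q : ℝ) (s : ℕ) : qint q s = (q ^ s - 1) / (q - 1) := by
  simp [qint]

lemma qint_add (hq0 : q ≠ 0) (x y : ℤ) : qint q (x + y) = qint q x + q ^ x * qint q y := by
  simp only [qint, zpow_add₀ hq0]
  ring

lemma qint_sub_qint (hq0 : q ≠ 0) (x y : ℤ) :
    qint q x - qint q y = -(q ^ x * qint q (y - x)) := by
  conv_lhs => rw [← add_sub_cancel x y, qint_add hq0]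
  ring

lemma qint_natCast_mul (q : ℝ) (s m : ℕ) :
    qint q ((s : ℤ) * m) = qint (q ^ m) s * qint q m := by
  rw [← Nat.cast_mul, qint_natCast, qint_natCast, qint_natCast, mul_comm s, pow_mul]
  by_cases hqm : q ^ m - 1 = 0
  · simp [sub_eq_zero.mp hqm]
  · rw [div_mul_div_cancel₀ hqm]

lemma qint_natCast_ne_zero (hq : 0 < q) (hq1 : q ≠ 1) {s : ℕ} (hs : s ≠ 0) :
    qint q s ≠ 0 := by
  rw [qint_natCast]
  exact div_ne_zero (sub_ne_zero.mpr <| mt (pow_eq_one_iff_of_nonneg hq.le hs).mp hq1)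
    (sub_ne_zero.mpr hq1)

lemma qfact_ne_zero (hq : 0 < q) (hq1 : q ≠ 1) (n : ℕ) : qfact q n ≠ 0 := by
  induction n with
  | zero => exact one_ne_zero
  | succ n ih => exact mul_ne_zero ih (mod_cast qint_natCast_ne_zero hq hq1 n.succ_ne_zero)

lemma qbinom_self (hq : 0 < q) (hq1 : q ≠ 1) (k : ℕ) : qbinom q k k = 1 := by
  simp [qbinom, qfact, qfact_ne_zero hq hq1 k]

lemma qbinom_zero_right (hq : 0 < q) (hq1 : q ≠ 1) (k : ℕ) : qbinom q k 0 = 1 := by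
  simp [qbinom, qfact, qfact_ne_zero hq hq1 k]

lemma qbinom_succ_succ (hq : 0 < q) (hq1 : q ≠ 1) {k j : ℕ} (hj : j < k) :
    qbinom q (k + 1) (j + 1) = qbinom q k j + q ^ (j + 1) * qbinom q k (j + 1) := by
  obtain ⟨d, rfl⟩ := Nat.exists_eq_add_of_lt hj
  have hsplit : qint q ((j : ℤ) + d + 1 + 1)
      = qint q ((j : ℤ) + 1) + q ^ (j + 1) * qint q ((d : ℤ) + 1) := by
    rw [show (j : ℤ) + d + 1 + 1 = (j + 1) + (d + 1) by ring, qint_add hq.ne']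
    norm_cast
  simp only [qbinom, show j + d + 1 + 1 - (j + 1) = d + 1 by omega,
    show j + d + 1 - j = d + 1 by omega, show j + d + 1 - (j + 1) = d by omega, qfact]
  have := qfact_ne_zero hq hq1
  have : qint q ((j : ℤ) + 1) ≠ 0 := mod_cast qint_natCast_ne_zero hq hq1 j.succ_ne_zero
  have : qint q ((d : ℤ) + 1) ≠ 0 := mod_cast qint_natCast_ne_zero hq hq1 d.succ_ne_zero
  push_cast
  rw [hsplit]
  field_simp

end QInt

/-- The coefficient of `x ^ j` in `∏_{i<k} (x - Q ^ i)`, by the Gaussian binomial theorem. -/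
noncomputable def qFallingCoeff (Q : ℝ) (k j : ℕ) : ℝ :=
  (-1) ^ (k - j) * Q ^ (k - j).choose 2 * qbinom Q k j

section QFallingCoeff

variable {Q : ℝ}

lemma qFallingCoeff_self (hQ : 0 < Q) (hQ1 : Q ≠ 1) (k : ℕ) : qFallingCoeff Q k k = 1 := by
  simp [qFallingCoeff, qbinom_self hQ hQ1]

lemma qFallingCoeff_succ_zero (hQ : 0 < Q) (hQ1 : Q ≠ 1) (k : ℕ) :
    qFallingCoeff Q (k + 1) 0 = -(Q ^ k * qFallingCoeff Q k 0) := by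
  simp only [qFallingCoeff, Nat.sub_zero, qbinom_zero_right hQ hQ1, Nat.choose_succ_succ',
    Nat.choose_one_right]
  ring

lemma qFallingCoeff_succ_succ (hQ : 0 < Q) (hQ1 : Q ≠ 1) {k j : ℕ} (hj : j < k) :
    qFallingCoeff Q (k + 1) (j + 1) = qFallingCoeff Q k j - Q ^ k * qFallingCoeff Q k (j + 1) := by
  obtain ⟨d, rfl⟩ := Nat.exists_eq_add_of_lt hj
  simp only [qFallingCoeff, qbinom_succ_succ hQ hQ1 hj,
    show j + d + 1 + 1 - (j + 1) = d + 1 by omega, show j + d + 1 - j = d + 1 by omega,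
    show j + d + 1 - (j + 1) = d by omega,
    Nat.choose_succ_succ', Nat.choose_one_right]
  ring

lemma sum_qFallingCoeff (hQ : 0 < Q) (hQ1 : Q ≠ 1) (k : ℕ) :
    ∑ j ∈ range (k + 1), qFallingCoeff Q k j = ∏ i ∈ range k, (1 - Q ^ i) := by
  induction k with
  | zero => simp [qFallingCoeff_self hQ hQ1]
  | succ k ih =>
    have hinner : ∑ j ∈ range k, qFallingCoeff Q (k + 1) (j + 1)
        = ∑ j ∈ range k, qFallingCoeff Q k j
          - Q ^ k * ∑ j ∈ range k, qFallingCoeff Q k (j + 1) := by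
      rw [mul_sum, ← sum_sub_distrib]
      exact sum_congr rfl fun j hj => qFallingCoeff_succ_succ hQ hQ1 (mem_range.mp hj)
    have hshift : ∑ j ∈ range k, qFallingCoeff Q k (j + 1) + qFallingCoeff Q k 0
        = ∑ j ∈ range k, qFallingCoeff Q k j + 1 := by
      rw [← sum_range_succ', sum_range_succ, qFallingCoeff_self hQ hQ1]
    rw [prod_range_succ, ← ih, sum_range_succ', sum_range_succ, hinner, qFallingCoeff_self hQ hQ1,
      qFallingCoeff_succ_zero hQ hQ1, sum_range_succ, qFallingCoeff_self hQ hQ1]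
    linear_combination (-Q ^ k) * hshift

lemma qFallingCoeff_succ_mul_qint (hQ : 0 < Q) (hQ1 : Q ≠ 1) (j d : ℕ) :
    qFallingCoeff Q (j + d + 1) j * qint Q (d + 1)
      = -(Q ^ d * qint Q (j + d + 1) * qFallingCoeff Q (j + d) j) := by
  simp only [qFallingCoeff, qbinom, show j + d + 1 - j = d + 1 by omega,
    show j + d - j = d by omega, qfact, Nat.choose_succ_succ', Nat.choose_one_right]
  have := qfact_ne_zero hQ hQ1
  have : qint Q ((d : ℤ) + 1) ≠ 0 := mod_cast qint_natCast_ne_zero hQ hQ1 d.succ_ne_zero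
  push_cast
  field_simp
  ring

end QFallingCoeff

lemma qFallingCoeff_succ_mul_qint_sub {q : ℝ} (hq : 0 < q) {m : ℕ} (hqm : q ^ m ≠ 1) (x : ℤ)
    {k j : ℕ} (hj : j ≤ k) :
    qFallingCoeff (q ^ m) (k + 1) j * (qint q (x + j * m) - qint q (x + (k + 1) * m))
      = q ^ x * (q ^ m) ^ k * (qint (q ^ m) (k + 1) * qint q m) * qFallingCoeff (q ^ m) k j := by
  obtain ⟨d, rfl⟩ := Nat.exists_eq_add_of_le hj
  have hgap : x + ((j + d : ℕ) + 1) * m - (x + j * m) = ((d + 1 : ℕ) : ℤ) * m := by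
    push_cast; ring
  have hpow : q ^ (x + j * m) = q ^ x * (q ^ m) ^ j := by
    rw [zpow_add₀ hq.ne', ← Nat.cast_mul, zpow_natCast, mul_comm j m, pow_mul]
  have hcoeff := qFallingCoeff_succ_mul_qint (pow_pos hq m) hqm j d
  rw [qint_sub_qint hq.ne', hgap, qint_natCast_mul, hpow]
  push_cast at hcoeff ⊢
  linear_combination (-(q ^ x * (q ^ m) ^ j * qint q m)) * hcoeff

lemma sum_qFallingCoeff_mul_qint_sub {q : ℝ} (hq : 0 < q) {m : ℕ} (hqm : q ^ m ≠ 1) (x : ℤ)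
    (k : ℕ) (f : ℕ → ℝ) :
    ∑ j ∈ range (k + 2),
        qFallingCoeff (q ^ m) (k + 1) j * (qint q (x + j * m) - qint q (x + (k + 1) * m)) * f j
      = q ^ x * (q ^ m) ^ k * (qint (q ^ m) (k + 1) * qint q m)
          * ∑ j ∈ range (k + 1), qFallingCoeff (q ^ m) k j * f j := by
  rw [sum_range_succ, mul_sum]
  push_cast
  rw [sub_self, mul_zero, zero_mul, add_zero]
  refine sum_congr rfl fun j hj => ?_
  rw [qFallingCoeff_succ_mul_qint_sub hq hqm x (Nat.lt_succ_iff.mp (mem_range.mp hj))]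
  ring

/-- The paper's `[x|m]_{\overline{n},q}`. -/
noncomputable def qRising (q : ℝ) (x : ℤ) (m n : ℕ) : ℝ :=
  ∏ i ∈ range n, qint q (x + i * m)

lemma qRising_succ (q : ℝ) (x : ℤ) (m n : ℕ) :
    qRising q x m (n + 1) = qRising q x m n * qint q (x + n * m) :=
  prod_range_succ _ n

noncomputable def qLahSum (q : ℝ) (m : ℕ) (x : ℤ) (n k : ℕ) : ℝ :=
  ∑ j ∈ range (k + 1), qFallingCoeff (q ^ m) k j * qRising q (x + j * m) m n

section QLahSum

variable {q : ℝ} {m : ℕ}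

lemma qLahSum_zero_zero (x : ℤ) : qLahSum q m x 0 0 = 1 := by
  simp [qLahSum, qRising, qFallingCoeff, qbinom, qfact]

lemma qLahSum_zero_succ (hq : 0 < q) (hqm : q ^ m ≠ 1) (x : ℤ) (k : ℕ) :
    qLahSum q m x 0 (k + 1) = 0 := by
  simp only [qLahSum, qRising, prod_range_zero, mul_one, sum_qFallingCoeff (pow_pos hq m) hqm]
  exact prod_eq_zero (mem_range.mpr k.succ_pos) (by simp)

lemma qLahSum_succ_zero (x : ℤ) (n : ℕ) :
    qLahSum q m x (n + 1) 0 = qint q (x + n * m) * qLahSum q m x n 0 := by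
  simp only [qLahSum, zero_add, sum_range_one, qRising_succ, Nat.cast_zero, zero_mul, add_zero]
  ring

lemma qLahSum_succ_succ (hq : 0 < q) (hqm : q ^ m ≠ 1) (x : ℤ) (n k : ℕ) :
    qLahSum q m x (n + 1) (k + 1)
      = q ^ (x + n * m) * (q ^ m) ^ k * (qint (q ^ m) (k + 1) * qint q m) * qLahSum q m x n k
        + qint q (x + (k + 1) * m + n * m) * qLahSum q m x n (k + 1) := by
  have hsplit : ∀ j ∈ range (k + 2),
      qFallingCoeff (q ^ m) (k + 1) j * qRising q (x + j * m) m (n + 1)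
        = qint q (x + (k + 1) * m + n * m)
            * (qFallingCoeff (q ^ m) (k + 1) j * qRising q (x + j * m) m n)
          + qFallingCoeff (q ^ m) (k + 1) j
            * (qint q (x + n * m + j * m) - qint q (x + n * m + (k + 1) * m))
            * qRising q (x + j * m) m n := by
    intro j _
    rw [show x + n * m + j * m = x + j * m + n * m by ring,
      show x + n * m + (k + 1) * m = x + (k + 1) * m + n * m by ring, qRising_succ]
    ring
  rw [qLahSum, sum_congr rfl hsplit, sum_add_distrib, ← mul_sum,
    sum_qFallingCoeff_mul_qint_sub hq hqm, add_comm]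
  rfl

end QLahSum

lemma qfact_mul_qLah_eq_qLahSum {q : ℝ} (hq : 0 < q) {m : ℕ} (hqm : q ^ m ≠ 1) (r n k : ℕ) :
    qfact (q ^ m) k * qint q m ^ k * qLah q m r n k = qLahSum q m (2 * r) n k := by
  induction n generalizing k with
  | zero =>
    cases k with
    | zero => simp [qLah, qfact, qLahSum_zero_zero]
    | succ k => simp [qLah, qLahSum_zero_succ hq hqm]
  | succ n ih =>
    cases k with
    | zero => simp [qLah, qfact, qLahSum_succ_zero, ← ih]
    | succ k =>
      have hpow : q ^ (2 * r + m * k + m * n) = q ^ ((2 * r : ℤ) + n * m) * (q ^ m) ^ k := by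
        rw [← pow_mul, ← zpow_natCast, ← zpow_natCast, ← zpow_add₀ hq.ne']
        push_cast
        ring_nf
      rw [qLahSum_succ_succ hq hqm, ← ih, ← ih, qLah, qfact, hpow]
      ring

theorem qLah_exponential_generating_function_general (q : ℝ) (hq : 0 < q) (hq1 : q ≠ 1) (m r : ℕ) (hm : 0 < m)
    (k : ℕ) :
    (PowerSeries.mk fun n => qLah q m r n k / qfact q n) =
      PowerSeries.C (R := ℝ) (1 / (qfact (q ^ m) k * (qint q m) ^ k)) *
        ∑ j ∈ Finset.range (k + 1),
          PowerSeries.C (R := ℝ)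
              ((-1 : ℝ) ^ (k - j) * q ^ (m * Nat.choose (k - j) 2) * qbinom (q ^ m) k j) *
            PowerSeries.mk
              (fun n => (∏ i ∈ Finset.range n, qint q (2 * r + j * m + i * m)) / qfact q n) := by
  have hqm : q ^ m ≠ 1 := mt (pow_eq_one_iff_of_nonneg hq.le hm.ne').mp hq1
  have hD : qfact (q ^ m) k * qint q m ^ k ≠ 0 := mul_ne_zero (qfact_ne_zero (pow_pos hq m) hqm k)
    (pow_ne_zero k (qint_natCast_ne_zero hq hq1 hm.ne'))
  ext n
  have hL : qLah q m r n k = qLahSum q m (2 * r) n k / (qfact (q ^ m) k * qint q m ^ k) := by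
    rw [← qfact_mul_qLah_eq_qLahSum hq hqm, mul_div_cancel_left₀ _ hD]
  simp only [PowerSeries.coeff_mk, PowerSeries.coeff_C_mul, map_sum, hL, qLahSum, qRising,
    qFallingCoeff, ← pow_mul]
  rw [sum_div, sum_div, mul_sum]
  exact sum_congr rfl fun j _ => by ring

theorem qLah_exponential_generating_function (q : ℝ) (hq : 0 < q) (hq1 : q ≠ 1) (m r : ℕ) (hm : 0 < m) (hr : 0 < r)
    (k : ℕ) :
    (PowerSeries.mk fun n => qLah q m r n k / qfact q n) =
      PowerSeries.C (R := ℝ) (1 / (qfact (q ^ m) k * (qint q m) ^ k)) *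
        ∑ j ∈ Finset.range (k + 1),
          PowerSeries.C (R := ℝ)
              ((-1 : ℝ) ^ (k - j) * q ^ (m * Nat.choose (k - j) 2) * qbinom (q ^ m) k j) *
            PowerSeries.mk
              (fun n => (∏ i ∈ Finset.range n, qint q (2 * r + j * m + i * m)) / qfact q n) :=
  qLah_exponential_generating_function_general q hq hq1 m r hm k
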